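/- arXiv:1008.3445 — 2 statements merged into one kernel-verified Lean document; each statement's English description precedes it below -/
import Mathlib

section
/- Let f, θ, y be functions on a real interval with θ nonvanishing, such that θ'' = (f + m₁)θ and y'' = (f + m)y for constants m, m₁ with m ≠ m₁. Then u = y' - (θ'/θ)y satisfies u'' = (θ·(1/θ)'' - m₁ + m)u. -/
/-!
With `g = θ'/θ`, the equation for `θ` becomes the Riccati equation `g' = f + m₁ - g²`. Substituting
it into `u = y' - g y` gives `u' = (m - m₁) y - g u`, and differentiating once more,
`u'' = (m - m₁ + g² - g') u`. Finally `(1/θ)' = -g/θ`, so `θ (1/θ)'' = g² - g'`.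
-/

open Filter Topology

section

variable {𝕜 : Type*} [NontriviallyNormedField 𝕜]

theorem deriv_deriv_eq_of_eventually_hasDerivAt {F G : 𝕜 → 𝕜} {x a : 𝕜}
    (hF : ∀ᶠ t in 𝓝 x, HasDerivAt F (G t) t) (hG : HasDerivAt G a x) :
    deriv (deriv F) x = a := by
  rw [EventuallyEq.deriv_eq (hF.mono fun _ ht => ht.deriv), hG.deriv]

theorem ContDiffOn.hasDerivAt_deriv_of_isOpen {E : Type*} [NormedAddCommGroup E]
    [NormedSpace 𝕜 E] {F : 𝕜 → E} {I : Set 𝕜} {x : 𝕜} (hF : ContDiffOn 𝕜 2 F I) (hI : IsOpen I) (hx : x ∈ I) :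
    HasDerivAt F (deriv F x) x ∧ HasDerivAt (deriv F) (deriv (deriv F) x) x :=
  ⟨((hF.contDiffAt (hI.mem_nhds hx)).differentiableAt two_ne_zero).hasDerivAt,
    (((hF.deriv_of_isOpen hI (by norm_num : (1 : WithTop ℕ∞) + 1 ≤ 2)).contDiffAt
      (hI.mem_nhds hx)).differentiableAt one_ne_zero).hasDerivAt⟩

theorem hasDerivAt_div_riccati {θ θ' : 𝕜 → 𝕜} {q x : 𝕜} (hθ : HasDerivAt θ (θ' x) x)
    (hθ' : HasDerivAt θ' (q * θ x) x) (hθx : θ x ≠ 0) :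
    HasDerivAt (fun t => θ' t / θ t) (q - (θ' x / θ x) ^ 2) x :=
  (hθ'.fun_div hθ hθx).congr_deriv (by field_simp)

theorem hasDerivAt_darboux_sub {y y' g : 𝕜 → 𝕜} {a m m₁ x : 𝕜} (hy : HasDerivAt y (y' x) x)
    (hy' : HasDerivAt y' ((a + m) * y x) x) (hg : HasDerivAt g (a + m₁ - g x ^ 2) x) :
    HasDerivAt (fun t => y' t - g t * y t) ((m - m₁) * y x - g x * (y' x - g x * y x)) x :=
  (hy'.fun_sub (hg.fun_mul hy)).congr_deriv (by ring)

theorem hasDerivAt_darboux_sub_deriv {y u g : 𝕜 → 𝕜} {c y' g' x : 𝕜} (hy : HasDerivAt y y' x)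
    (hu : HasDerivAt u (c * y x - g x * u x) x) (hg : HasDerivAt g g' x)
    (hux : u x = y' - g x * y x) :
    HasDerivAt (fun t => c * y t - g t * u t) ((c + g x ^ 2 - g') * u x) x :=
  ((hy.const_mul c).fun_sub (hg.fun_mul hu)).congr_deriv (by rw [hux]; ring)

theorem mul_deriv_deriv_one_div {θ : 𝕜 → 𝕜} {g' x : 𝕜}
    (hθ : ∀ᶠ t in 𝓝 x, HasDerivAt θ (deriv θ t) t ∧ θ t ≠ 0)
    (hg : HasDerivAt (fun t => deriv θ t / θ t) g' x) :
    θ x * deriv (deriv fun t => 1 / θ t) x = (deriv θ x / θ x) ^ 2 - g' := by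
  obtain ⟨hθx, hθx0⟩ := hθ.self_of_nhds
  have hinv : ∀ᶠ t in 𝓝 x,
      HasDerivAt (fun t => 1 / θ t) (-(deriv θ t / θ t) / θ t) t := by
    filter_upwards [hθ] with t ⟨ht, ht0⟩
    exact ((hasDerivAt_const t (1 : 𝕜)).fun_div ht ht0).congr_deriv (by field_simp; ring)
  rw [deriv_deriv_eq_of_eventually_hasDerivAt hinv (hg.fun_neg.fun_div hθx hθx0)]
  field_simp
  ring

end

theorem darboux_transformation_general (I : Set ℝ) (hI : IsOpen I)
    (f θ y : ℝ → ℝ) (m m₁ : ℝ)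
    (hθ : ContDiffOn ℝ 2 θ I) (hy : ContDiffOn ℝ 2 y I)
    (hθne : ∀ x ∈ I, θ x ≠ 0)
    (hθeq : ∀ x ∈ I, deriv (deriv θ) x = (f x + m₁) * θ x)
    (hyeq : ∀ x ∈ I, deriv (deriv y) x = (f x + m) * y x) :
    ∀ x ∈ I,
      deriv (deriv (fun t => deriv y t - (deriv θ t / θ t) * y t)) x
        = (θ x * deriv (deriv (fun t => 1 / θ t)) x - m₁ + m)
            * (deriv y x - (deriv θ x / θ x) * y x) := by
  have hθd (t) (ht : t ∈ I) := hθ.hasDerivAt_deriv_of_isOpen hI ht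
  have hyd (t) (ht : t ∈ I) := hy.hasDerivAt_deriv_of_isOpen hI ht
  have hg (t) (ht : t ∈ I) : HasDerivAt (fun t => deriv θ t / θ t)
      (f t + m₁ - (deriv θ t / θ t) ^ 2) t :=
    hasDerivAt_div_riccati (hθd t ht).1 (hθeq t ht ▸ (hθd t ht).2) (hθne t ht)
  have hu (t) (ht : t ∈ I) := hasDerivAt_darboux_sub (hyd t ht).1
    (hyeq t ht ▸ (hyd t ht).2) (hg t ht)
  intro x hx
  have hIx : ∀ᶠ t in 𝓝 x, t ∈ I := hI.mem_nhds hx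
  rw [deriv_deriv_eq_of_eventually_hasDerivAt (hIx.mono hu)
      (hasDerivAt_darboux_sub_deriv (hyd x hx).1 (hu x hx) (hg x hx) rfl),
    mul_deriv_deriv_one_div (hIx.mono fun t ht => ⟨(hθd t ht).1, hθne t ht⟩) (hg x hx)]
  ring

/-- Darboux's transformation: if `θ'' = (f + m₁)·θ` with `θ` nonvanishing and
`y'' = (f + m)·y` with `m ≠ m₁`, then `u = y' - (θ'/θ)·y` satisfies
`u'' = (θ·(1/θ)'' - m₁ + m)·u`. -/
theorem darboux_transformation (I : Set ℝ) (hI : IsOpen I)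
    (f θ y : ℝ → ℝ) (m m₁ : ℝ) (hm : m ≠ m₁)
    (hf : DifferentiableOn ℝ f I)
    (hθ : ContDiffOn ℝ 2 θ I) (hy : ContDiffOn ℝ 2 y I)
    (hθne : ∀ x ∈ I, θ x ≠ 0)
    (hθeq : ∀ x ∈ I, deriv (deriv θ) x = (f x + m₁) * θ x)
    (hyeq : ∀ x ∈ I, deriv (deriv y) x = (f x + m) * y x) :
    ∀ x ∈ I,
      deriv (deriv (fun t => deriv y t - (deriv θ t / θ t) * y t)) x
        = (θ x * deriv (deriv (fun t => 1 / θ t)) x - m₁ + m)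
            * (deriv y x - (deriv θ x / θ x) * y x) :=
  darboux_transformation_general I hI f θ y m m₁ hθ hy hθne hθeq hyeq
end

section
/- Let Q(x) = x⁴ + q₃x³ + q₂x² + q₁x + q₀ - λ be written via completing squares as (x² + a₁x + a₀)² + b₁x + b₀. If P is a monic polynomial satisfying P'' - 2(x² + a₁x + a₀)P' - (2x + a₁ + b₁x + b₀)P = 0, then Ψ(x) = P(x)·e^{-(x³/3 + a₁x²/2 + a₀x)} satisfies Ψ'' = Q(x)·Ψ. -/
/-!
Writing `Ψ = P · e^{-Φ}` with `Φ' = W`, two differentiations give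
`Ψ'' = (P'' - 2 W P' - W' P + W² P) e^{-Φ}`. For `Φ = x³/3 + a₁x²/2 + a₀x` the weight `W` is
`x² + a₁x + a₀`, whose square is the quartic potential up to the linear term `b₁x + b₀`; so the
ODE for `P` is exactly `Ψ'' = (W² + b₁x + b₀) Ψ`.
-/

open Complex

section GaugeTransform

variable {P Φ W W' : ℝ → ℂ}

theorem deriv_mul_cexp_neg (hP : Differentiable ℝ P) (hΦ : ∀ x, HasDerivAt Φ (W x) x) :
    deriv (fun x => P x * cexp (-Φ x)) = fun x => (deriv P x - W x * P x) * cexp (-Φ x) := by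
  funext x
  refine ((hP x).hasDerivAt.mul (hΦ x).neg.cexp).deriv.trans ?_
  simp only [Pi.neg_apply]
  ring

theorem deriv_deriv_mul_cexp_neg (hP : ContDiff ℝ 2 P) (hΦ : ∀ x, HasDerivAt Φ (W x) x)
    (hW : ∀ x, HasDerivAt W (W' x) x) (x : ℝ) :
    deriv (deriv fun x => P x * cexp (-Φ x)) x
      = (deriv (deriv P) x - 2 * W x * deriv P x + (W x ^ 2 - W' x) * P x) * cexp (-Φ x) := by
  have hP₁ : Differentiable ℝ P := hP.differentiable (by norm_num)
  rw [deriv_mul_cexp_neg hP₁ hΦ]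
  refine (((hP.differentiable_deriv_two x).hasDerivAt.sub
    ((hW x).mul (hP₁ x).hasDerivAt)).mul (hΦ x).neg.cexp).deriv.trans ?_
  simp only [Pi.neg_apply, Pi.sub_apply, Pi.mul_apply]
  ring

end GaugeTransform

theorem hasDerivAt_ofReal (x : ℝ) : HasDerivAt (fun y : ℝ => (y : ℂ)) 1 x := by
  simpa using (hasDerivAt_id x).ofReal_comp

theorem hasDerivAt_cubic_primitive (a₀ a₁ : ℂ) (x : ℝ) :
    HasDerivAt (fun y : ℝ => (y : ℂ) ^ 3 / 3 + a₁ * (y : ℂ) ^ 2 / 2 + a₀ * y)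
      ((x : ℂ) ^ 2 + a₁ * x + a₀) x := by
  have h := hasDerivAt_ofReal x
  refine (((h.pow 3).div_const 3).add (((h.pow 2).const_mul a₁).div_const 2) |>.add
    (h.const_mul a₀)).congr_deriv ?_
  norm_num
  ring

theorem hasDerivAt_quadratic (a₀ a₁ : ℂ) (x : ℝ) :
    HasDerivAt (fun y : ℝ => (y : ℂ) ^ 2 + a₁ * y + a₀) (2 * (x : ℂ) + a₁) x := by
  have h := hasDerivAt_ofReal x
  refine (((h.pow 2).add (h.const_mul a₁)).add_const a₀).congr_deriv ?_
  norm_num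

theorem quartic_eq_sq_add_linear {q₀ q₁ q₂ q₃ lam a₀ a₁ b₀ b₁ : ℂ}
    (ha₁ : a₁ = q₃ / 2) (ha₀ : a₀ = q₂ / 2 - a₁ ^ 2 / 2)
    (hb₁ : b₁ = q₁ - 2 * a₀ * a₁) (hb₀ : b₀ = q₀ - a₀ ^ 2 - lam) (x : ℂ) :
    x ^ 4 + q₃ * x ^ 3 + q₂ * x ^ 2 + q₁ * x + q₀ - lam = (x ^ 2 + a₁ * x + a₀) ^ 2 + b₁ * x + b₀ := by
  linear_combination (-2 * x ^ 3) * ha₁ + (-2 * x ^ 2) * ha₀ + (-x) * hb₁ - hb₀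

/-- Quartic anharmonic oscillator: with `x⁴+q₃x³+q₂x²+q₁x+q₀-λ = (x²+a₁x+a₀)² + b₁x + b₀`
via completing squares, if the polynomial function `P` satisfies
`P'' - 2(x²+a₁x+a₀)P' - (2x + a₁ + b₁x + b₀)P = 0`, then
`Ψ = P·e^{-(x³/3 + a₁x²/2 + a₀x)}` satisfies `Ψ'' = (x⁴+q₃x³+q₂x²+q₁x+q₀-λ)·Ψ`. -/
theorem quartic_anharmonic (q₀ q₁ q₂ q₃ lam a₀ a₁ b₀ b₁ : ℂ)
    (ha₁ : a₁ = q₃ / 2) (ha₀ : a₀ = q₂ / 2 - a₁ ^ 2 / 2)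
    (hb₁ : b₁ = q₁ - 2 * a₀ * a₁) (hb₀ : b₀ = q₀ - a₀ ^ 2 - lam)
    (P : ℝ → ℂ) (hP : ContDiff ℝ 2 P)
    (hPode : ∀ x : ℝ,
      deriv (deriv P) x - 2 * ((x : ℂ) ^ 2 + a₁ * x + a₀) * deriv P x
        - (2 * (x : ℂ) + a₁ + b₁ * x + b₀) * P x = 0)
    (Ψ : ℝ → ℂ)
    (hΨ : Ψ = fun x : ℝ =>
      P x * Complex.exp (-((x : ℂ) ^ 3 / 3 + a₁ * (x : ℂ) ^ 2 / 2 + a₀ * x))) :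
    ∀ x : ℝ,
      deriv (deriv Ψ) x
        = ((x : ℂ) ^ 4 + q₃ * (x : ℂ) ^ 3 + q₂ * (x : ℂ) ^ 2 + q₁ * x + q₀ - lam)
            * Ψ x := by
  intro x
  subst hΨ
  rw [deriv_deriv_mul_cexp_neg hP (hasDerivAt_cubic_primitive a₀ a₁) (hasDerivAt_quadratic a₀ a₁),
    quartic_eq_sq_add_linear ha₁ ha₀ hb₁ hb₀]
  linear_combination cexp (-((x : ℂ) ^ 3 / 3 + a₁ * (x : ℂ) ^ 2 / 2 + a₀ * x)) * hPode x
end
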